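/- Let v_1,…,v_n ∈ V be pairwise orthogonal vectors and K(1),…,K(d) ⊆ {1,…,n} subsets with Q(v_i) ≠ 0 for all i ∈ K(ν), so that each basis blade E_ν = e_{K(ν)} is invertible. Let A = Σ_J a_J e_J be an arbitrary real linear combination of basis blades and let l ∈ {0,1}^d be a multi-index. Then the iterated decomposition equals the simultaneous one: A_{c^l(→(E_1,…,E_d))} = Σ_{J∈S} a_J e_J, where S is the set of those subsets J ⊆ {1,…,n} such that for every ν = 1,…,d one has |J|·|K(ν)| − |J ∩ K(ν)| ≡ l_ν (mod 2); equivalently, the index set of A_{c^l(→(E_1,…,E_d))} is the intersection over ν of the index sets of the single decompositions c^{l_ν}(E_ν). -/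

import Mathlib

/-!
Orthogonal vectors anticommute in the Clifford algebra, so for basis blades
`e_J * e_K = (-1) ^ m • (e_K * e_J)`, where `m` counts the pairs `(i, j) ∈ J × K` with `i ≠ j`,
i.e. `m = |J| |K| - |J ∩ K|`. Conjugation by an invertible blade `e_K` therefore multiplies each
`e_J` by a sign, so `c^s(e_K)` keeps the blades with `m ≡ s (mod 2)` and kills the others; a
decomposition of `Σ_J a_J e_J` is again such a sum, and iterating intersects the parity conditions.
-/

noncomputable section
open CliffordAlgebra

variable {V : Type*} [AddCommGroup V] [Module ℝ V] (Q : QuadraticForm ℝ V)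

/-- The basis blade `e_J`: the product `∏_{i ∈ J} ι(v i)` with factors taken in
increasing order of the index, `e_∅ = 1`. -/
def basisBlade {n : ℕ} (v : Fin n → V) (J : Finset (Fin n)) : CliffordAlgebra Q :=
  ((J.sort (· ≤ ·)).map (fun i => ι Q (v i))).prod

/-- The commutative (`s = 0`) and anticommutative (`s = 1`) part of `A` with respect to an
invertible element `B`: `A_{c^s(B)} = ½(A + (−1)^s B⁻¹AB)`. -/
def cPart {𝔸 : Type*} [Ring 𝔸] [Algebra ℝ 𝔸] (B : 𝔸) (s : Fin 2) (A : 𝔸) : 𝔸 :=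
  (2 : ℝ)⁻¹ • (A + (-1 : 𝔸) ^ (s : ℕ) * (Ring.inverse B * A * B))

/-- The forward iterated decomposition `A_{c^l(→B)}`, applying the first list entry first. -/
def cFwd {𝔸 : Type*} [Ring 𝔸] [Algebra ℝ 𝔸] (L : List (𝔸 × Fin 2)) (A : 𝔸) : 𝔸 :=
  L.foldl (fun acc p => cPart p.1 p.2 acc) A

namespace CliffordAlgebra

variable {σ : Type*} [DecidableEq σ] {v : σ → V}

theorem ι_mul_prod_map_ι (hv : Pairwise fun i j => Q.IsOrtho (v i) (v j)) (i : σ)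
    (L : List σ) :
    ι Q (v i) * (L.map fun j => ι Q (v j)).prod =
      (-1 : ℝ) ^ L.countP (· ≠ i) • ((L.map fun j => ι Q (v j)).prod * ι Q (v i)) := by
  induction L with
  | nil => simp
  | cons j L ih =>
    simp only [List.map_cons, List.prod_cons, List.countP_cons, pow_add]
    by_cases hji : j = i
    · subst hji
      simp [← mul_assoc, ih]
    · rw [← mul_assoc, ι_mul_ι_comm_of_isOrtho (hv (Ne.symm hji)), neg_mul, mul_assoc, ih]
      simp [hji, ← mul_assoc]

theorem prod_map_ι_mul_prod_map_ι (hv : Pairwise fun i j => Q.IsOrtho (v i) (v j))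
    (M L : List σ) :
    (M.map fun i => ι Q (v i)).prod * (L.map fun j => ι Q (v j)).prod =
      (-1 : ℝ) ^ (M.map fun i => L.countP (· ≠ i)).sum •
        ((L.map fun j => ι Q (v j)).prod * (M.map fun i => ι Q (v i)).prod) := by
  induction M with
  | nil => simp
  | cons i M ih =>
    simp only [List.map_cons, List.prod_cons, List.sum_cons, pow_add, mul_assoc, ih,
      mul_smul_comm]
    rw [← mul_assoc, ι_mul_prod_map_ι Q hv, smul_mul_assoc, smul_smul, mul_assoc, mul_comm]

end CliffordAlgebra

theorem Finset.sum_map_sort_countP_sort_ne {α : Type*} [LinearOrder α] (J K : Finset α) :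
    ((J.sort (· ≤ ·)).map fun i => (K.sort (· ≤ ·)).countP (· ≠ i)).sum =
      J.card * K.card - (J ∩ K).card := by
  have hcount : ∀ i, (K.sort (· ≤ ·)).countP (· ≠ i) = (K.erase i).card := by
    intro i
    rw [← filter_ne', card_def, filter_val, ← Multiset.countP_eq_card_filter,
      ← sort_eq K (· ≤ ·), Multiset.coe_countP]
  have hsum :
      ((J.sort (· ≤ ·)).map fun i => (K.erase i).card).sum = ∑ i ∈ J, (K.erase i).card := by
    rw [((sort_perm_toList J _).map _).sum_eq, sum_map_toList]
  have herase : ∑ i ∈ J, (K.erase i).card + (J ∩ K).card = J.card * K.card := by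
    rw [← filter_mem_eq_inter, card_filter, ← sum_add_distrib, sum_const_nat fun i _ => ?_]
    split_ifs with hi
    · exact card_erase_add_one hi
    · rw [erase_eq_of_notMem hi, add_zero]
  simp only [hcount, hsum]
  omega

variable {n : ℕ} {v : Fin n → V}

theorem basisBlade_mul_basisBlade (hv : Pairwise fun i j => Q.IsOrtho (v i) (v j))
    (J K : Finset (Fin n)) :
    basisBlade Q v J * basisBlade Q v K =
      (-1 : ℝ) ^ (J.card * K.card - (J ∩ K).card) • (basisBlade Q v K * basisBlade Q v J) := by
  rw [basisBlade, basisBlade, prod_map_ι_mul_prod_map_ι Q hv, Finset.sum_map_sort_countP_sort_ne]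

theorem isUnit_basisBlade {J : Finset (Fin n)} (hJ : ∀ i ∈ J, Q (v i) ≠ 0) :
    IsUnit (basisBlade Q v J) :=
  List.prod_isUnit <| by simpa [isUnit_iff_ne_zero] using hJ

section cPart

variable {𝔸 : Type*} [Ring 𝔸] [Algebra ℝ 𝔸]

theorem cPart_sum_smul (B : 𝔸) (s : Fin 2) {κ : Type*} (S : Finset κ) (c : κ → ℝ)
    (f : κ → 𝔸) :
    cPart B s (∑ x ∈ S, c x • f x) = ∑ x ∈ S, c x • cPart B s (f x) := by
  simp only [cPart, Finset.mul_sum, Finset.sum_mul, mul_smul_comm, smul_mul_assoc,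
    ← Finset.sum_add_distrib, ← smul_add, Finset.smul_sum, smul_comm (2 : ℝ)⁻¹]

theorem cPart_of_mul_eq_smul_mul {B A : 𝔸} (hB : IsUnit B) {m : ℕ}
    (h : A * B = (-1 : ℝ) ^ m • (B * A)) (s : Fin 2) :
    cPart B s A = if m % 2 = s then A else 0 := by
  rw [cPart, mul_assoc, h, mul_smul_comm, Ring.inverse_mul_cancel_left _ _ hB,
    neg_one_pow_eq_pow_mod_two (R := ℝ)]
  rcases Nat.mod_two_eq_zero_or_one m with hm | hm <;> fin_cases s <;> simp [hm] <;> module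

end cPart

theorem cFwd_cons {𝔸 : Type*} [Ring 𝔸] [Algebra ℝ 𝔸] (p : 𝔸 × Fin 2) (L : List (𝔸 × Fin 2))
    (A : 𝔸) : cFwd (p :: L) A = cFwd L (cPart p.1 p.2 A) :=
  rfl

theorem cPart_basisBlade_sum (hv : Pairwise fun i j => Q.IsOrtho (v i) (v j))
    {K : Finset (Fin n)} (hK : ∀ i ∈ K, Q (v i) ≠ 0) (s : Fin 2)
    (S : Finset (Finset (Fin n))) (a : Finset (Fin n) → ℝ) :
    cPart (basisBlade Q v K) s (∑ J ∈ S, a J • basisBlade Q v J) =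
      ∑ J ∈ S with (J.card * K.card - (J ∩ K).card) % 2 = s, a J • basisBlade Q v J := by
  simp only [cPart_sum_smul, cPart_of_mul_eq_smul_mul (isUnit_basisBlade Q hK)
    (basisBlade_mul_basisBlade Q hv _ K), smul_ite, smul_zero, Finset.sum_ite,
    Finset.sum_const_zero, add_zero]

theorem cFwd_ofFn_basisBlade_sum (hv : Pairwise fun i j => Q.IsOrtho (v i) (v j)) {d : ℕ}
    (K : Fin d → Finset (Fin n)) (hK : ∀ ν, ∀ i ∈ K ν, Q (v i) ≠ 0) (l : Fin d → Fin 2)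
    (S : Finset (Finset (Fin n))) (a : Finset (Fin n) → ℝ) :
    cFwd (List.ofFn fun ν => (basisBlade Q v (K ν), l ν)) (∑ J ∈ S, a J • basisBlade Q v J) =
      ∑ J ∈ S with ∀ ν, (J.card * (K ν).card - (J ∩ K ν).card) % 2 = l ν,
        a J • basisBlade Q v J := by
  induction d generalizing S with
  | zero => simp [cFwd]
  | succ d ih =>
    rw [List.ofFn_succ, cFwd_cons, cPart_basisBlade_sum Q hv (hK 0),
      ih (fun ν => K ν.succ) (fun ν => hK ν.succ) (fun ν => l ν.succ), Finset.filter_filter]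
    simp only [Fin.forall_fin_succ]

/-- The iterated decomposition of `A = Σ_J a_J e_J` with respect to the invertible basis blades
`e_{K(1)},…,e_{K(d)}` equals the simultaneous decomposition: it selects exactly those basis
blades whose commutation parity with every `e_{K(ν)}` matches `l_ν`. -/
theorem cFwd_basisBlade_decomposition {n d : ℕ} (v : Fin n → V)
    (hv : ∀ i j : Fin n, i ≠ j → QuadraticMap.polar Q (v i) (v j) = 0)
    (K : Fin d → Finset (Fin n)) (hK : ∀ ν, ∀ i ∈ K ν, Q (v i) ≠ 0)
    (a : Finset (Fin n) → ℝ)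
    (A : CliffordAlgebra Q) (hA : A = ∑ J : Finset (Fin n), a J • basisBlade Q v J)
    (l : Fin d → Fin 2) :
    cFwd (List.ofFn (fun ν => (basisBlade Q v (K ν), l ν))) A =
      ∑ J ∈ Finset.univ.filter
          (fun J : Finset (Fin n) =>
            ∀ ν : Fin d, (J.card * (K ν).card - (J ∩ K ν).card) % 2 = (l ν : ℕ)),
        a J • basisBlade Q v J := by
  subst hA
  exact cFwd_ofFn_basisBlade_sum Q
    (fun i j hij => QuadraticMap.isOrtho_polarBilin.mp (hv i j hij)) K hK l Finset.univ a
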